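/- arXiv:1311.2324 — 2 statements merged into one kernel-verified Lean document; each statement's English description precedes it below -/
import Mathlib

section
/- Assume pₙ < n·ln(n·ln n) for all n ≥ 6, and let U : ℝ → (1, ∞) be the inverse of z ↦ z·ln(z·ln z). Then for all real x ≥ 11, π(x) > U(x) − 1. -/
noncomputable def nthPrime (n : ℕ) : ℕ := Nat.nth Nat.Prime (n - 1)
noncomputable def primePi (x : ℝ) : ℕ := Nat.primeCounting ⌊x⌋₊

/-!
Otherwise `π(x) + 1 ≤ U(x)`, and since `z ↦ z ln(z ln z)` is increasing on `[e, ∞)`, the hypothesis at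
`n = π(x) + 1 ≥ 6` gives `p_{π(x)+1} < x`, contradicting `x < p_{π(x)+1}`.
-/

open Real Set

lemma monotoneOn_mul_log_mul_log : MonotoneOn (fun z : ℝ ↦ z * log (z * log z)) (Ici (exp 1)) := by
  intro b hb a ha hab
  simp only [mem_Ici] at hb ha
  have hb_pos : 0 < b := (exp_pos 1).trans_le hb
  have hlog_b : 1 ≤ log b := by simpa using log_le_log (exp_pos 1) hb
  have hb_one : 1 ≤ b := (one_le_exp zero_le_one).trans hb
  have hmul : b * log b ≤ a * log a := mul_le_mul hab (log_le_log hb_pos hab) (by linarith) (by linarith)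
  have hlog_mul_nonneg : 0 ≤ log (b * log b) := log_nonneg (one_le_mul_of_one_le_of_one_le hb_one hlog_b)
  exact mul_le_mul hab (log_le_log (by positivity) hmul) hlog_mul_nonneg (by linarith)

lemma Nat.lt_nth_prime_primeCounting (n : ℕ) : n < Nat.nth Nat.Prime (Nat.primeCounting n) :=
  (Nat.count_le_iff_le_nth Nat.infinite_setOfPred_prime).1 le_rfl

lemma lt_nthPrime_primePi_add_one (x : ℝ) : x < nthPrime (primePi x + 1) := by
  have h := Nat.lt_nth_prime_primeCounting ⌊x⌋₊
  calc x < ⌊x⌋₊ + 1 := Nat.lt_floor_add_one x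
    _ ≤ nthPrime (primePi x + 1) := by
      rw [nthPrime, primePi, Nat.add_sub_cancel]
      exact_mod_cast h

lemma five_le_primePi {x : ℝ} (hx : 11 ≤ x) : 5 ≤ primePi x :=
  calc 5 = Nat.primeCounting 11 := by decide
    _ ≤ primePi x := Nat.monotone_primeCounting (Nat.le_floor (by exact_mod_cast hx))

theorem primePi_gt_U_sub_one
    (hp : ∀ n : ℕ, 6 ≤ n → (nthPrime n : ℝ) < n * Real.log (n * Real.log n))
    (U : ℝ → ℝ)
    (hU : ∀ y : ℝ, 1 < U y ∧ U y * Real.log (U y * Real.log (U y)) = y) :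
    ∀ x : ℝ, 11 ≤ x → U x - 1 < (primePi x : ℝ) := by
  intro x hx
  set n := primePi x
  by_contra! hUx
  have h6 : (6 : ℝ) ≤ (n + 1 : ℕ) := by exact_mod_cast Nat.succ_le_succ (five_le_primePi hx)
  have he : exp 1 ≤ ((n + 1 : ℕ) : ℝ) := (exp_one_lt_d9.trans (by norm_num)).le.trans h6
  have hle : ((n + 1 : ℕ) : ℝ) ≤ U x := by push_cast; linarith
  have := calc
    x < nthPrime (n + 1) := lt_nthPrime_primePi_add_one x
    _ < (n + 1 : ℕ) * log ((n + 1 : ℕ) * log (n + 1 : ℕ)) := hp (n + 1) (by exact_mod_cast h6)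
    _ ≤ U x * log (U x * log (U x)) := monotoneOn_mul_log_mul_log he (he.trans hle) hle
    _ = x := (hU x).2
  exact this.false
end

section
/- Let W₋₁ : [−1/e, 0) → (−∞, −1] denote the branch of Lambert W satisfying W₋₁(y)·exp(W₋₁(y)) = y and W₋₁(y) ≤ −1. Suppose that n > pₙ / ln pₙ for all n ≥ 7 (equivalently π(x) > x/ln x for x ≥ 17). Then for all n ≥ 7, pₙ < −n · W₋₁(−1/n). -/
/-! Put `w = W₋₁(-1/n)` and `x = -n w`. The defining equation `w eʷ = -1/n` says exactly
`x = e^{-w}`, so `log x = -w` and `x / log x = n`, while `w ≤ -1` gives `x ≥ e`. Since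
`t ↦ t / log t` is increasing on `[e, ∞)`, the hypothesis `pₙ / log pₙ < n = x / log x`
forces `pₙ < x`. -/

open Real Set

theorem div_log_monotoneOn : MonotoneOn (fun x : ℝ ↦ x / log x) (Ici (exp 1)) := by
  intro x hx y hy hxy
  have hlog_pos {t : ℝ} (ht : t ∈ Ici (exp 1)) : 0 < log t / t := by
    have : 1 ≤ log t := by simpa using log_le_log (exp_pos 1) ht
    exact div_pos (by linarith) ((exp_pos 1).trans_le ht)
  simpa only [inv_div] using
    (inv_le_inv₀ (hlog_pos hx) (hlog_pos hy)).2 (log_div_self_antitoneOn hx hy hxy)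

theorem lt_of_div_log_lt_div_log {x p : ℝ} (hx : exp 1 ≤ x) (h : p / log p < x / log x) :
    p < x := by
  by_contra! hxp
  exact (div_log_monotoneOn hx (mem_Ici.2 (hx.trans hxp)) hxp).not_gt h

theorem neg_mul_eq_exp_neg_of_mul_exp_eq {y w : ℝ} (hy : y ≠ 0) (h : w * exp w = -1 / y) :
    -y * w = exp (-w) := by
  rw [exp_neg]
  refine eq_inv_of_mul_eq_one_left ?_
  rw [mul_assoc, h]
  field_simp

theorem exp_one_le_neg_mul_of_mul_exp_eq {y w : ℝ} (hy : y ≠ 0) (h : w * exp w = -1 / y)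
    (hw : w ≤ -1) : exp 1 ≤ -y * w := by
  rw [neg_mul_eq_exp_neg_of_mul_exp_eq hy h]
  exact exp_le_exp.2 (by linarith)

theorem neg_mul_div_log_eq_of_mul_exp_eq {y w : ℝ} (hy : y ≠ 0) (h : w * exp w = -1 / y)
    (hw : w ≤ -1) : -y * w / log (-y * w) = y := by
  rw [neg_mul_eq_exp_neg_of_mul_exp_eq hy h, log_exp, ← neg_mul_eq_exp_neg_of_mul_exp_eq hy h]
  field_simp [show w ≠ 0 by linarith]

theorem nthPrime_lt_neg_mul_Wm1 (Wm1 : ℝ → ℝ)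
    (hW : ∀ t : ℝ, -1 / Real.exp 1 ≤ t → t < 0 →
      Wm1 t * Real.exp (Wm1 t) = t ∧ Wm1 t ≤ -1)
    (hn : ∀ n : ℕ, 7 ≤ n → (nthPrime n : ℝ) / Real.log (nthPrime n) < n) :
    ∀ n : ℕ, 7 ≤ n → (nthPrime n : ℝ) < -(n : ℝ) * Wm1 (-1 / n) := by
  intro n hn7
  have hn_ge : exp 1 ≤ n := by
    have : (7 : ℝ) ≤ n := by exact_mod_cast hn7
    linarith [exp_one_lt_d9]
  have hn_ne : (n : ℝ) ≠ 0 := ((exp_pos 1).trans_le hn_ge).ne'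
  obtain ⟨hW_eq, hW_le⟩ := hW (-1 / n)
    (by rw [neg_div, neg_div, neg_le_neg_iff]; exact one_div_le_one_div_of_le (exp_pos 1) hn_ge)
    (by rw [neg_div]; exact neg_neg_of_pos (by positivity))
  apply lt_of_div_log_lt_div_log (exp_one_le_neg_mul_of_mul_exp_eq hn_ne hW_eq hW_le)
  rw [neg_mul_div_log_eq_of_mul_exp_eq hn_ne hW_eq hW_le]
  exact hn n hn7
end
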